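/- For every natural number r ≥ 3, setting k = 2r+1 and n = k!/2, there exists a Mondrian partition of the n×n square into exactly k rectangles whose defect equals ((k−1)!!)²/2, where (k−1)!! = (k−1)(k−3)···2 is the double factorial; in particular d_k(n) ≤ ((k−1)!!)²/2 and d(n) ≤ ((k−1)!!)²/2. -/

import Mathlib

/-- An axis-aligned rectangle with integer coordinates placed on the grid:
lower-left corner `(x, y)`, width `w`, and height `h`. -/
structure Rect where
  x : ℕ
  y : ℕ
  w : ℕ
  h : ℕ
deriving DecidableEq

/-- The area of a rectangle. -/
def Rect.area (r : Rect) : ℕ := r.w * r.h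

/-- Two rectangles are congruent if they have the same dimensions,
possibly after a ninety-degree rotation. -/
def Rect.Congruent (r s : Rect) : Prop :=
  (r.w = s.w ∧ r.h = s.h) ∨ (r.w = s.h ∧ r.h = s.w)

/-- The rectangle `r` covers the unit grid cell `[i, i+1) × [j, j+1)`. -/
def Rect.Covers (r : Rect) (i j : ℕ) : Prop :=
  r.x ≤ i ∧ i < r.x + r.w ∧ r.y ≤ j ∧ j < r.y + r.h

/-- A Mondrian partition of the `n × n` square: a finite collection of
pairwise non-congruent rectangles with positive integer side lengths that
tile the square (every cell of the square is covered by exactly one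
rectangle, and rectangles lie inside the square). -/
structure Mondrian (n : ℕ) where
  rects : Finset Rect
  pos : ∀ r ∈ rects, 0 < r.w ∧ 0 < r.h
  inside : ∀ r ∈ rects, r.x + r.w ≤ n ∧ r.y + r.h ≤ n
  cover : ∀ i j : ℕ, i < n → j < n → ∃! r : Rect, r ∈ rects ∧ r.Covers i j
  noncong : ∀ r ∈ rects, ∀ s ∈ rects, r ≠ s → ¬ r.Congruent s

/-- The defect of a Mondrian partition: the difference between the largest
and the smallest rectangle areas. -/
def Mondrian.defect {n : ℕ} (P : Mondrian n) : ℕ :=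
  P.rects.sup fun r => P.rects.sup fun s => r.area - s.area

/-- A Mondrian partition is perfect if all its rectangles have the same area. -/
def Mondrian.IsPerfect {n : ℕ} (P : Mondrian n) : Prop :=
  ∀ r ∈ P.rects, ∀ s ∈ P.rects, r.area = s.area

/-- `mondrianDk n k` is the minimum defect over all Mondrian partitions of the
`n × n` square using exactly `k` rectangles. -/
noncomputable def mondrianDk (n k : ℕ) : ℕ :=
  sInf {d | ∃ P : Mondrian n, P.rects.card = k ∧ P.defect = d}

/-- `mondrianD n` is the minimum defect over all Mondrian partitions of the
`n × n` square (into at least two rectangles). -/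
noncomputable def mondrianD (n : ℕ) : ℕ :=
  sInf {d | ∃ P : Mondrian n, 2 ≤ P.rects.card ∧ P.defect = d}

/-!
The square is built as a staircase. Put `D = ((2r)‼)² / 2` and `W = (2r+1)‼ (2r-1)‼`, and cut a
`D × W` block into pieces of heights `(W - 1) / 2` and `(W + 1) / 2`. Then glue, alternately, a
strip along the whole right side and one along the whole top, until the side is `(2r+1)! / 2`.
With vertical cuts at `x_m = D (2m+1)‼ / (2m)‼` and horizontal cuts at
`y_m = W (2m)‼ / (2 (2m-1)‼)`, every strip has area
`x_m (y_{m+1} - y_m) = (x_{m+1} - x_m) y_{m+1} = W D / 2`, while the two pieces of the block have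
areas `W D / 2 ∓ D / 2`: the defect is `D`. No two strips are congruent: Wallis-type bounds put
every short side below `D` and every long side above it, and the long sides are distinct, within
each family by monotonicity and across the families because `x_m` has more factors of `2` than
any `y_m'`.
-/

open Finset
open scoped Nat

lemma Rect.congruent_refl (R : Rect) : R.Congruent R := .inl ⟨rfl, rfl⟩

lemma Rect.Congruent.area_eq {R R' : Rect} (h : R.Congruent R') : R.area = R'.area := by
  rcases h with ⟨hw, hh⟩ | ⟨hw, hh⟩ <;> simp only [Rect.area, hw, hh, Nat.mul_comm]

lemma Rect.Congruent.max_eq {R R' : Rect} (h : R.Congruent R') :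
    max R.w R.h = max R'.w R'.h := by
  rcases h with ⟨hw, hh⟩ | ⟨hw, hh⟩ <;> simp only [hw, hh, max_comm]

lemma Mondrian.defect_eq {n lo hi : ℕ} (P : Mondrian n) (hlo : ∀ R ∈ P.rects, lo ≤ R.area)
    (hhi : ∀ R ∈ P.rects, R.area ≤ hi) {R₀ R₁ : Rect} (hR₀ : R₀ ∈ P.rects) (hR₁ : R₁ ∈ P.rects)
    (hR₀lo : R₀.area = lo) (hR₁hi : R₁.area = hi) : P.defect = hi - lo := by
  refine le_antisymm (Finset.sup_le fun R hR => Finset.sup_le fun R' hR' => ?_) ?_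
  · exact tsub_le_tsub (hhi R hR) (hlo R' hR')
  · exact le_sup_of_le hR₁ (le_sup_of_le hR₀ (by rw [hR₀lo, hR₁hi]))

lemma exists_le_lt_succ {f : ℕ → ℕ} {N t : ℕ} (h₀ : f 0 ≤ t) (hN : t < f N) :
    ∃ k < N, f k ≤ t ∧ t < f (k + 1) := by
  obtain _ | N := N
  · exact absurd hN (not_lt.2 h₀)
  have hex : ∃ k, t < f (k + 1) := ⟨N, hN⟩
  refine ⟨Nat.find hex, Nat.lt_succ_of_le (Nat.find_min' hex hN), ?_, Nat.find_spec hex⟩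
  rcases h : Nat.find hex with _ | k
  · exact h₀
  · exact not_lt.1 (Nat.find_min hex (show k < Nat.find hex by omega))

section Staircase

variable (u v : ℕ → ℕ)

-- With `u 0 = v 0 = 0`: `inl 0` is the corner tile, `inr k` lies along the top of
-- `[0, u k) × [0, v k)` and `inl k` along the right side of `[0, u k) × [0, v (k + 1))`.
def staircaseTile : ℕ ⊕ ℕ → Rect
  | .inl k => ⟨u k, 0, u (k + 1) - u k, v (k + 1)⟩
  | .inr k => ⟨0, v k, u k, v (k + 1) - v k⟩

def staircaseIndex (r : ℕ) : Finset (ℕ ⊕ ℕ) := (range (r + 1)).disjSum (Icc 1 r)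

def staircase (r : ℕ) : Finset Rect := (staircaseIndex r).image (staircaseTile u v)

variable {u v}

lemma staircaseTile_inl_covers_iff {k i j : ℕ} (hk : u k ≤ u (k + 1)) :
    (staircaseTile u v (.inl k)).Covers i j ↔ u k ≤ i ∧ i < u (k + 1) ∧ j < v (k + 1) := by
  simp only [staircaseTile, Rect.Covers]
  omega

lemma staircaseTile_inr_covers_iff {k i j : ℕ} (hk : v k ≤ v (k + 1)) :
    (staircaseTile u v (.inr k)).Covers i j ↔ i < u k ∧ v k ≤ j ∧ j < v (k + 1) := by
  simp only [staircaseTile, Rect.Covers]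
  omega

variable {r : ℕ}

lemma card_staircase (hnc : ∀ k ∈ staircaseIndex r, ∀ l ∈ staircaseIndex r,
    (staircaseTile u v k).Congruent (staircaseTile u v l) → k = l) :
    (staircase u v r).card = 2 * r + 1 := by
  have hinj : Set.InjOn (staircaseTile u v) (staircaseIndex r) :=
    fun k hk l hl h => hnc k hk l hl (h ▸ Rect.congruent_refl _)
  rw [staircase, card_image_of_injOn hinj, staircaseIndex, card_disjSum, card_range,
    Nat.card_Icc]
  omega

variable (hu : StrictMonoOn u (Set.Iic (r + 1))) (hv : StrictMonoOn v (Set.Iic (r + 1)))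
include hu hv

lemma existsUnique_mem_staircase_covers (hu₀ : u 0 = 0) (hv₀ : v 0 = 0) {i j : ℕ}
    (hi : i < u (r + 1)) (hj : j < v (r + 1)) :
    ∃! R, R ∈ staircase u v r ∧ R.Covers i j := by
  have hu_le {a b : ℕ} (hb : b ≤ r + 1) (hab : a ≤ b) : u a ≤ u b :=
    hu.monotoneOn (Set.mem_Iic.2 (hab.trans hb)) (Set.mem_Iic.2 hb) hab
  have hv_le {a b : ℕ} (hb : b ≤ r + 1) (hab : a ≤ b) : v a ≤ v b :=
    hv.monotoneOn (Set.mem_Iic.2 (hab.trans hb)) (Set.mem_Iic.2 hb) hab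
  have hu_lt {a b : ℕ} (ha : a ≤ r + 1) (hb : b ≤ r + 1) (ha' : u a ≤ i) (hb' : i < u b) : a < b :=
    (hu.lt_iff_lt ha hb).1 (ha'.trans_lt hb')
  have hv_lt {a b : ℕ} (ha : a ≤ r + 1) (hb : b ≤ r + 1) (ha' : v a ≤ j) (hb' : j < v b) : a < b :=
    (hv.lt_iff_lt ha hb).1 (ha'.trans_lt hb')
  -- the column band `p` and the row band `q` of the cell decide which tile covers it
  obtain ⟨p, hpr, hpi, hip⟩ := exists_le_lt_succ (by omega) hi
  obtain ⟨q, hqr, hqj, hjq⟩ := exists_le_lt_succ (by omega) hj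
  set c : ℕ ⊕ ℕ := if q ≤ p then .inl p else .inr q
  have hc : c ∈ staircaseIndex r ∧ (staircaseTile u v c).Covers i j := by
    by_cases hqp : q ≤ p
    · simp only [c, if_pos hqp, staircaseIndex, inl_mem_disjSum, mem_range,
        staircaseTile_inl_covers_iff (hu_le (by omega) p.le_succ)]
      exact ⟨hpr, hpi, hip, hjq.trans_le (hv_le (by omega) (by omega))⟩
    · simp only [c, if_neg hqp, staircaseIndex, inr_mem_disjSum, mem_Icc,
        staircaseTile_inr_covers_iff (hv_le (by omega) q.le_succ)]
      exact ⟨⟨by omega, by omega⟩, hip.trans_le (hu_le (by omega) (by omega)), hqj, hjq⟩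
  have hunique : ∀ k ∈ staircaseIndex r, (staircaseTile u v k).Covers i j → k = c := by
    rintro (a | a) hk hcov <;>
      simp only [staircaseIndex, inl_mem_disjSum, inr_mem_disjSum, mem_range, mem_Icc] at hk
    · rw [staircaseTile_inl_covers_iff (hu_le (by omega) a.le_succ)] at hcov
      have := hu_lt (by omega) (by omega) hcov.1 hip
      have := hu_lt (by omega) (by omega) hpi hcov.2.1
      have := hv_lt (by omega) (by omega) hqj hcov.2.2
      simp only [c, if_pos (show q ≤ p by omega), show a = p by omega]
    · rw [staircaseTile_inr_covers_iff (hv_le (by omega) a.le_succ)] at hcov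
      have := hv_lt (by omega) (by omega) hcov.2.1 hjq
      have := hv_lt (by omega) (by omega) hqj hcov.2.2
      have := hu_lt (by omega) (by omega) hpi hcov.1
      simp only [c, if_neg (show ¬q ≤ p by omega), show a = q by omega]
  refine ⟨staircaseTile u v c, ⟨mem_image_of_mem _ hc.1, hc.2⟩, ?_⟩
  rintro R ⟨hR, hcov⟩
  obtain ⟨k, hk, rfl⟩ := mem_image.1 hR
  rw [hunique k hk hcov]

lemma staircaseTile_pos_and_le {k : ℕ ⊕ ℕ} (hk : k ∈ staircaseIndex r) :
    (0 < (staircaseTile u v k).w ∧ 0 < (staircaseTile u v k).h) ∧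
      (staircaseTile u v k).x + (staircaseTile u v k).w ≤ u (r + 1) ∧
      (staircaseTile u v k).y + (staircaseTile u v k).h ≤ v (r + 1) := by
  have hu_le {a : ℕ} (ha : a ≤ r + 1) : u a ≤ u (r + 1) :=
    hu.monotoneOn (show a ≤ r + 1 from ha) (show r + 1 ≤ r + 1 from le_rfl) ha
  have hv_le {a : ℕ} (ha : a ≤ r + 1) : v a ≤ v (r + 1) :=
    hv.monotoneOn (show a ≤ r + 1 from ha) (show r + 1 ≤ r + 1 from le_rfl) ha
  rcases k with a | a <;>
    simp only [staircaseIndex, inl_mem_disjSum, inr_mem_disjSum, mem_range, mem_Icc] at hk <;>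
    simp only [staircaseTile]
  · have := hu (show a ≤ r + 1 by omega) (show a + 1 ≤ r + 1 by omega) a.lt_succ_self
    have := hv (show 0 ≤ r + 1 by omega) (show a + 1 ≤ r + 1 by omega) a.succ_pos
    have := hu_le (a := a + 1) (by omega)
    have := hv_le (a := a + 1) (by omega)
    omega
  · have := hu (show 0 ≤ r + 1 by omega) (show a ≤ r + 1 by omega) (by omega : 0 < a)
    have := hv (show a ≤ r + 1 by omega) (show a + 1 ≤ r + 1 by omega) a.lt_succ_self
    have := hu_le (a := a) (by omega)
    have := hv_le (a := a + 1) (by omega)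
    omega

theorem exists_mondrian_staircase {n : ℕ} (hu₀ : u 0 = 0) (hv₀ : v 0 = 0) (hun : u (r + 1) = n)
    (hvn : v (r + 1) = n) (hnc : ∀ k ∈ staircaseIndex r, ∀ l ∈ staircaseIndex r,
      (staircaseTile u v k).Congruent (staircaseTile u v l) → k = l) :
    ∃ P : Mondrian n, P.rects = staircase u v r := by
  refine ⟨⟨staircase u v r, ?_, ?_, ?_, ?_⟩, rfl⟩
  · simp only [staircase, forall_mem_image]
    exact fun k hk => (staircaseTile_pos_and_le hu hv hk).1
  · simp only [staircase, forall_mem_image]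
    intro k hk
    have := (staircaseTile_pos_and_le hu hv hk).2
    omega
  · exact fun i j hi hj =>
      existsUnique_mem_staircase_covers hu hv hu₀ hv₀ (by omega) (by omega)
  · simp only [staircase, forall_mem_image]
    exact fun k hk l hl hne hcong => hne (congrArg _ (hnc k hk l hl hcong))

end Staircase

namespace Spiral

-- `oddProd a b = (2b-1)‼ / (2a-1)‼` and `evenProd a b = (2b)‼ / (2a)‼`.
def oddProd (a b : ℕ) : ℕ := ∏ i ∈ Ico a b, (2 * i + 1)

def evenProd (a b : ℕ) : ℕ := ∏ i ∈ Ico a b, (2 * i + 2)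

lemma oddProd_pos (a b : ℕ) : 0 < oddProd a b := prod_pos fun _ _ => by omega

lemma evenProd_pos (a b : ℕ) : 0 < evenProd a b := prod_pos fun _ _ => by omega

lemma oddProd_mul_oddProd {a b c : ℕ} (hab : a ≤ b) (hbc : b ≤ c) :
    oddProd a b * oddProd b c = oddProd a c :=
  prod_Ico_consecutive _ hab hbc

lemma evenProd_mul_evenProd {a b c : ℕ} (hab : a ≤ b) (hbc : b ≤ c) :
    evenProd a b * evenProd b c = evenProd a c :=
  prod_Ico_consecutive _ hab hbc

lemma oddProd_succ_right {a b : ℕ} (hab : a ≤ b) : oddProd a (b + 1) = oddProd a b * (2 * b + 1) :=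
  prod_Ico_succ_top hab _

lemma evenProd_succ_right {a b : ℕ} (hab : a ≤ b) :
    evenProd a (b + 1) = evenProd a b * (2 * b + 2) :=
  prod_Ico_succ_top hab _

lemma oddProd_eq_mul_succ_left {a b : ℕ} (hab : a < b) :
    oddProd a b = (2 * a + 1) * oddProd (a + 1) b :=
  prod_eq_prod_Ico_succ_bot hab _

lemma evenProd_eq_mul_succ_left {a b : ℕ} (hab : a < b) :
    evenProd a b = (2 * a + 2) * evenProd (a + 1) b :=
  prod_eq_prod_Ico_succ_bot hab _

lemma oddProd_self (a : ℕ) : oddProd a a = 1 := by rw [oddProd, Ico_self, prod_empty]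

lemma evenProd_self (a : ℕ) : evenProd a a = 1 := by rw [evenProd, Ico_self, prod_empty]

lemma oddProd_zero_one : oddProd 0 1 = 1 := rfl

lemma odd_oddProd (a b : ℕ) : Odd (oddProd a b) :=
  prod_induction _ Odd (fun _ _ => Odd.mul) odd_one fun i _ => odd_two_mul_add_one i

lemma even_evenProd {a b : ℕ} (hab : a < b) : Even (evenProd a b) := by
  rw [evenProd_eq_mul_succ_left hab]
  exact Even.mul_right ⟨a + 1, by ring⟩ _

lemma oddProd_lt_evenProd {a b : ℕ} (hab : a < b) : oddProd a b < evenProd a b :=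
  prod_lt_prod_of_nonempty (fun _ _ => by omega) (fun _ _ => by omega) (nonempty_Ico.2 hab)

lemma oddProd_zero_succ (r : ℕ) : oddProd 0 (r + 1) = (2 * r + 1)‼ := by
  rw [Nat.doubleFactorial_eq_prod_odd, oddProd, Nat.Ico_zero_eq_range, prod_range_succ']
  simp [mul_add]

lemma evenProd_zero (r : ℕ) : evenProd 0 r = (2 * r)‼ := by
  rw [Nat.doubleFactorial_eq_prod_even, evenProd, Nat.Ico_zero_eq_range]
  simp [mul_add]

variable (r : ℕ)

-- `oddSq r = W` and `2 * halfEven r ^ 2 = D`; `xCut r m` and `yCut r m` are the cuts `x_m`, `y_m`.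
def halfEven : ℕ := evenProd 1 r

def oddSq : ℕ := oddProd 0 (r + 1) * oddProd 0 r

def stripArea : ℕ := oddSq r * halfEven r ^ 2

def xCut (m : ℕ) : ℕ := halfEven r * oddProd 0 (m + 1) * evenProd m r

def yCut (m : ℕ) : ℕ := oddProd 0 (r + 1) * oddProd m r * evenProd 1 m

def xStep (m : ℕ) : ℕ := halfEven r * oddProd 0 (m + 1) * evenProd (m + 1) r

def yStep (m : ℕ) : ℕ := oddProd 0 (r + 1) * oddProd (m + 1) r * evenProd 1 m

variable {r}

lemma evenProd_zero_eq (hr : 1 ≤ r) : evenProd 0 r = 2 * halfEven r :=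
  evenProd_eq_mul_succ_left hr

lemma halfEven_pos : 0 < halfEven r := evenProd_pos _ _

lemma xStep_pos (m : ℕ) : 0 < xStep r m := by
  have := evenProd_pos 1 r; have := oddProd_pos 0 (m + 1); have := evenProd_pos (m + 1) r
  unfold xStep halfEven; positivity

lemma yStep_pos (m : ℕ) : 0 < yStep r m := by
  have := oddProd_pos 0 (r + 1); have := oddProd_pos (m + 1) r; have := evenProd_pos 1 m
  unfold yStep; positivity

lemma xCut_eq_mul_xStep {m : ℕ} (hm : m < r) : xCut r m = (2 * m + 2) * xStep r m := by
  rw [xCut, xStep, evenProd_eq_mul_succ_left hm]; ring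

lemma xCut_succ (m : ℕ) : xCut r (m + 1) = (2 * m + 3) * xStep r m := by
  rw [xCut, xStep, oddProd_succ_right (Nat.zero_le _)]; ring

lemma yCut_eq_mul_yStep {m : ℕ} (hm : m < r) : yCut r m = (2 * m + 1) * yStep r m := by
  rw [yCut, yStep, oddProd_eq_mul_succ_left hm]; ring

lemma yCut_succ {m : ℕ} (hm : 1 ≤ m) : yCut r (m + 1) = (2 * m + 2) * yStep r m := by
  rw [yCut, yStep, evenProd_succ_right hm]; ring

lemma xStep_mul_yCut_succ {m : ℕ} (hm : m < r) : xStep r m * yCut r (m + 1) = stripArea r := by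
  rw [xStep, yCut, stripArea, oddSq, halfEven,
    ← oddProd_mul_oddProd (b := m + 1) (Nat.zero_le _) hm,
    ← evenProd_mul_evenProd (b := m + 1) (by omega) hm]
  ring

lemma xCut_mul_yStep {m : ℕ} (hm₁ : 1 ≤ m) (hm : m < r) : xCut r m * yStep r m = stripArea r := by
  rw [xCut, yStep, stripArea, oddSq, halfEven,
    ← oddProd_mul_oddProd (b := m + 1) (Nat.zero_le _) hm,
    ← evenProd_mul_evenProd (b := m) hm₁ hm.le]
  ring

lemma xCut_zero (hr : 1 ≤ r) : xCut r 0 = 2 * halfEven r ^ 2 := by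
  rw [xCut, evenProd_zero_eq hr, oddProd_zero_one]
  ring

lemma yCut_one (hr : 1 ≤ r) : yCut r 1 = oddSq r := by
  rw [yCut, oddSq, oddProd_eq_mul_succ_left hr, evenProd_self]
  ring

lemma xCut_self : xCut r r = oddProd 0 (r + 1) * halfEven r := by
  rw [xCut, evenProd_self]
  ring

lemma yCut_self : yCut r r = oddProd 0 (r + 1) * halfEven r := by
  rw [yCut, oddProd_self, halfEven]
  ring

lemma oddSq_succ (r : ℕ) : oddSq (r + 1) = oddSq r * ((2 * r + 1) * (2 * r + 3)) := by
  rw [oddSq, oddSq, oddProd_succ_right (Nat.zero_le (r + 1)), oddProd_succ_right (Nat.zero_le r)]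
  ring

lemma halfEven_succ (hr : 1 ≤ r) : halfEven (r + 1) = halfEven r * (2 * r + 2) :=
  evenProd_succ_right hr

lemma oddSq_one : oddSq 1 = 3 := rfl

lemma halfEven_one : halfEven 1 = 1 := rfl

-- `oddSq r / halfEven r ^ 2` decreases from `3` to its Wallis limit `8 / π`.
lemma oddSq_le_three_mul_halfEven_sq (hr : 1 ≤ r) : oddSq r ≤ 3 * halfEven r ^ 2 := by
  induction r, hr using Nat.le_induction with
  | base => norm_num [oddSq_one, halfEven_one]
  | succ r hr ih =>
    rw [oddSq_succ, halfEven_succ hr]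
    have : (2 * r + 1) * (2 * r + 3) ≤ (2 * r + 2) ^ 2 := by nlinarith
    calc oddSq r * ((2 * r + 1) * (2 * r + 3)) ≤ 3 * halfEven r ^ 2 * (2 * r + 2) ^ 2 :=
          Nat.mul_le_mul ih this
      _ = 3 * (halfEven r * (2 * r + 2)) ^ 2 := by ring

lemma four_mul_succ_mul_halfEven_sq_le (hr : 1 ≤ r) :
    4 * (r + 1) * halfEven r ^ 2 ≤ (2 * r + 1) * oddSq r := by
  induction r, hr using Nat.le_induction with
  | base => norm_num [oddSq_one, halfEven_one]
  | succ r hr ih =>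
    rw [oddSq_succ, halfEven_succ hr]
    have := Nat.mul_le_mul_right ((2 * r + 3) ^ 2) ih
    nlinarith

lemma odd_oddSq (r : ℕ) : Odd (oddSq r) := (odd_oddProd _ _).mul (odd_oddProd _ _)

lemma two_mul_halfEven_sq_lt_oddSq (hr : 1 ≤ r) : 2 * halfEven r ^ 2 < oddSq r := by
  have := four_mul_succ_mul_halfEven_sq_le hr
  have := halfEven_pos (r := r)
  nlinarith

lemma xCut_pos (m : ℕ) : 0 < xCut r m := by
  have := evenProd_pos 1 r; have := oddProd_pos 0 (m + 1); have := evenProd_pos m r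
  unfold xCut halfEven; positivity

lemma xCut_lt_xCut_succ {m : ℕ} (hm : m < r) : xCut r m < xCut r (m + 1) := by
  rw [xCut_eq_mul_xStep hm, xCut_succ]
  have := xStep_pos (r := r) m
  nlinarith

lemma yCut_lt_yCut_succ {m : ℕ} (hm₁ : 1 ≤ m) (hm : m < r) : yCut r m < yCut r (m + 1) := by
  rw [yCut_eq_mul_yStep hm, yCut_succ hm₁]
  have := yStep_pos (r := r) m
  nlinarith

variable (r) in
def colSeq : ℕ → ℕ
  | 0 => 0
  | m + 1 => xCut r m

variable (r) in
def rowSeq : ℕ → ℕ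
  | 0 => 0
  | 1 => oddSq r / 2
  | m + 2 => yCut r (m + 1)

lemma colSeq_strictMonoOn : StrictMonoOn (colSeq r) (Set.Iic (r + 1)) := by
  refine strictMonoOn_Iic_of_lt_succ fun m hm => ?_
  rw [Nat.succ_eq_succ]
  rcases m with _ | m
  · exact xCut_pos 0
  · exact xCut_lt_xCut_succ (by omega)

lemma rowSeq_strictMonoOn (hr : 1 ≤ r) : StrictMonoOn (rowSeq r) (Set.Iic (r + 1)) := by
  refine strictMonoOn_Iic_of_lt_succ fun m hm => ?_
  rw [Nat.succ_eq_succ]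
  have := two_mul_halfEven_sq_lt_oddSq hr
  have := Nat.one_le_pow 2 _ (halfEven_pos (r := r))
  rcases m with _ | _ | m
  · show 0 < oddSq r / 2
    omega
  · show oddSq r / 2 < yCut r 1
    rw [yCut_one hr]
    omega
  · exact yCut_lt_yCut_succ (by omega) (by omega)

lemma xStep_lt_xCut_zero {m : ℕ} (hm : m < r) : xStep r m < xCut r 0 := by
  have hlt := oddProd_lt_evenProd m.succ_pos
  have hpos := mul_pos (halfEven_pos (r := r)) (evenProd_pos (m + 1) r)
  calc xStep r m = halfEven r * evenProd (m + 1) r * oddProd 0 (m + 1) := by rw [xStep]; ring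
    _ < halfEven r * evenProd (m + 1) r * evenProd 0 (m + 1) := Nat.mul_lt_mul_of_pos_left hlt hpos
    _ = xCut r 0 := by
      rw [xCut, oddProd_zero_one, ← evenProd_mul_evenProd (Nat.zero_le (m + 1)) hm]; ring

lemma xCut_one (hr : 1 < r) : xCut r 1 = 3 * halfEven r ^ 2 := by
  have h₁ : xCut r 1 = 3 * xStep r 0 := xCut_succ 0
  have h₀ : xCut r 0 = 2 * xStep r 0 := xCut_eq_mul_xStep (by omega)
  rw [xCut_zero (by omega)] at h₀
  omega

lemma yStep_lt_xCut_zero {m : ℕ} (hm₁ : 1 ≤ m) (hm : m < r) : yStep r m < xCut r 0 := by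
  have hmono : xCut r 1 ≤ xCut r m :=
    colSeq_strictMonoOn.monotoneOn (show 2 ≤ r + 1 by omega) (show m + 1 ≤ r + 1 by omega)
      (by omega : 2 ≤ m + 1)
  have hsq := Nat.one_le_pow 2 _ (halfEven_pos (r := r))
  have h3 : 3 * yStep r m ≤ oddSq r := by
    refine Nat.le_of_mul_le_mul_right ?_ hsq
    calc 3 * yStep r m * halfEven r ^ 2 = xCut r 1 * yStep r m := by
          rw [xCut_one (by omega)]; ring
      _ ≤ xCut r m * yStep r m := Nat.mul_le_mul_right _ hmono
      _ = oddSq r * halfEven r ^ 2 := xCut_mul_yStep hm₁ hm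
  have := oddSq_le_three_mul_halfEven_sq (r := r) (by omega)
  rw [xCut_zero (by omega)]
  omega

lemma xCut_zero_lt_yCut_succ {m : ℕ} (hm : m < r) : xCut r 0 < yCut r (m + 1) := by
  have hr : 1 ≤ r := by omega
  have hmono : yCut r 1 ≤ yCut r (m + 1) :=
    (rowSeq_strictMonoOn hr).monotoneOn (show 2 ≤ r + 1 by omega) (show m + 2 ≤ r + 1 by omega)
      (by omega : 2 ≤ m + 2)
  rw [xCut_zero hr]
  rw [yCut_one hr] at hmono
  have := two_mul_halfEven_sq_lt_oddSq hr
  omega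

/-- Clearing the denominators turns `xCut r m = yCut r m'` into an even number equal to an
odd one. -/
lemma xCut_ne_yCut {m m' : ℕ} (hm : m < r) (hm'₁ : 1 ≤ m') (hm' : m' ≤ r) :
    xCut r m ≠ yCut r m' := by
  intro h
  have hy : yCut r m' * evenProd m' r = halfEven r * (oddProd 0 (r + 1) * oddProd m' r) := by
    rw [yCut, halfEven, ← evenProd_mul_evenProd hm'₁ hm']; ring
  have hx : xCut r m * evenProd m' r =
      halfEven r * (oddProd 0 (m + 1) * evenProd m r * evenProd m' r) := by
    rw [xCut]; ring
  have heq := Nat.eq_of_mul_eq_mul_left halfEven_pos (hx.symm.trans (h ▸ hy))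
  have heven : Even (oddProd 0 (m + 1) * evenProd m r * evenProd m' r) :=
    ((even_evenProd hm).mul_left _).mul_right _
  rw [heq] at heven
  exact Nat.not_even_iff_odd.2 ((odd_oddProd _ _).mul (odd_oddProd _ _)) heven

variable (r) in
abbrev tile : ℕ ⊕ ℕ → Rect := staircaseTile (colSeq r) (rowSeq r)

lemma area_tile_inl_zero (hr : 1 ≤ r) :
    (tile r (.inl 0)).area + halfEven r ^ 2 = stripArea r := by
  obtain ⟨g, hg⟩ := odd_oddSq r
  simp only [staircaseTile, Rect.area, colSeq, rowSeq, xCut_zero hr, Nat.sub_zero, stripArea, hg]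
  rw [show (2 * g + 1) / 2 = g by omega]
  ring

lemma area_tile_inr_one (hr : 1 ≤ r) :
    (tile r (.inr 1)).area = stripArea r + halfEven r ^ 2 := by
  obtain ⟨g, hg⟩ := odd_oddSq r
  simp only [staircaseTile, Rect.area, colSeq, rowSeq, xCut_zero hr, yCut_one hr, stripArea, hg]
  rw [show 2 * g + 1 - (2 * g + 1) / 2 = g + 1 by omega]
  ring

lemma tile_inl_succ {m : ℕ} (hm : m < r) :
    (tile r (.inl (m + 1))).w = xStep r m ∧
      (tile r (.inl (m + 1))).h = yCut r (m + 1) := by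
  refine ⟨?_, rfl⟩
  show xCut r (m + 1) - xCut r m = xStep r m
  rw [xCut_succ, xCut_eq_mul_xStep hm]
  exact Nat.sub_eq_of_eq_add (by ring)

lemma tile_inr_succ_succ {m : ℕ} (hm : m + 2 ≤ r) :
    (tile r (.inr (m + 2))).w = xCut r (m + 1) ∧
      (tile r (.inr (m + 2))).h = yStep r (m + 1) := by
  refine ⟨rfl, ?_⟩
  show yCut r (m + 2) - yCut r (m + 1) = yStep r (m + 1)
  rw [yCut_succ (by omega), yCut_eq_mul_yStep (by omega)]
  exact Nat.sub_eq_of_eq_add (by ring)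

-- The two pieces of the block are told apart from the strips by their areas, the strips by their
-- long sides.
lemma tile_cases (hr : 1 ≤ r) {k : ℕ ⊕ ℕ} (hk : k ∈ staircaseIndex r) :
    (k = .inl 0 ∧ (tile r k).area + halfEven r ^ 2 = stripArea r) ∨
    (k = .inr 1 ∧ (tile r k).area = stripArea r + halfEven r ^ 2) ∨
    ((tile r k).area = stripArea r ∧
      ∃ m < r, k = .inl (m + 1) ∧ max (tile r k).w (tile r k).h = yCut r (m + 1)) ∨
    ((tile r k).area = stripArea r ∧
      ∃ m, m + 2 ≤ r ∧ k = .inr (m + 2) ∧ max (tile r k).w (tile r k).h = xCut r (m + 1)) := by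
  rcases k with (_ | m) | (_ | _ | m) <;>
    simp only [staircaseIndex, inl_mem_disjSum, inr_mem_disjSum, mem_range, mem_Icc] at hk
  · exact .inl ⟨rfl, area_tile_inl_zero hr⟩
  · obtain ⟨hw, hh⟩ := tile_inl_succ (r := r) (m := m) (by omega)
    refine .inr (.inr (.inl ⟨?_, m, by omega, rfl, ?_⟩))
    · rw [Rect.area, hw, hh, xStep_mul_yCut_succ (by omega)]
    · rw [hw, hh]
      exact max_eq_right ((xStep_lt_xCut_zero (by omega)).trans
        (xCut_zero_lt_yCut_succ (by omega))).le
  · omega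
  · exact .inr (.inl ⟨rfl, area_tile_inr_one hr⟩)
  · obtain ⟨hw, hh⟩ := tile_inr_succ_succ (r := r) (m := m) (by omega)
    refine .inr (.inr (.inr ⟨?_, m, by omega, rfl, ?_⟩))
    · rw [Rect.area, hw, hh, xCut_mul_yStep (by omega) (by omega)]
    · have : xCut r 0 < xCut r (m + 1) :=
        colSeq_strictMonoOn (show 1 ≤ r + 1 by omega) (show m + 2 ≤ r + 1 by omega) (by omega)
      rw [hw, hh]
      exact max_eq_left ((yStep_lt_xCut_zero (by omega) (by omega)).trans this).le

lemma eq_of_congruent_tile (hr : 1 ≤ r) {k l : ℕ ⊕ ℕ} (hk : k ∈ staircaseIndex r)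
    (hl : l ∈ staircaseIndex r) (h : (tile r k).Congruent (tile r l)) : k = l := by
  have harea := h.area_eq
  have hmax := h.max_eq
  have hsq := Nat.one_le_pow 2 _ (halfEven_pos (r := r))
  rcases tile_cases hr hk with ⟨rfl, hk'⟩ | ⟨rfl, hk'⟩ | ⟨hk', m, hm, rfl, hkmax⟩ |
      ⟨hk', m, hm, rfl, hkmax⟩ <;>
    rcases tile_cases hr hl with ⟨rfl, hl'⟩ | ⟨rfl, hl'⟩ | ⟨hl', m', hm', rfl, hlmax⟩ |
      ⟨hl', m', hm', rfl, hlmax⟩ <;>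
    first | rfl | (exfalso; omega) | skip
  · have := (rowSeq_strictMonoOn hr).injOn (show m + 2 ≤ r + 1 by omega)
      (show m' + 2 ≤ r + 1 by omega) (hkmax.symm.trans (hmax.trans hlmax) : yCut r (m + 1) = _)
    rw [show m = m' by omega]
  · exact absurd (hlmax.symm.trans (hmax.symm.trans hkmax))
      (xCut_ne_yCut (by omega) (by omega) (by omega))
  · exact absurd (hkmax.symm.trans (hmax.trans hlmax))
      (xCut_ne_yCut (by omega) (by omega) (by omega))
  · have := colSeq_strictMonoOn.injOn (show m + 2 ≤ r + 1 by omega)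
      (show m' + 2 ≤ r + 1 by omega) (hkmax.symm.trans (hmax.trans hlmax) : xCut r (m + 1) = _)
    rw [show m = m' by omega]

lemma factorial_div_two (hr : 1 ≤ r) : (2 * r + 1)! / 2 = oddProd 0 (r + 1) * halfEven r := by
  rw [Nat.factorial_eq_mul_doubleFactorial, ← oddProd_zero_succ, ← evenProd_zero,
    evenProd_zero_eq hr, mul_left_comm, Nat.mul_div_cancel_left _ two_pos]

lemma doubleFactorial_sq_div_two (hr : 1 ≤ r) : (2 * r)‼ ^ 2 / 2 = 2 * halfEven r ^ 2 := by
  rw [← evenProd_zero, evenProd_zero_eq hr,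
    show (2 * halfEven r) ^ 2 = 2 * (2 * halfEven r ^ 2) by ring, Nat.mul_div_cancel_left _ two_pos]

theorem exists_mondrian (hr : 1 ≤ r) :
    ∃ P : Mondrian ((2 * r + 1)! / 2), P.rects.card = 2 * r + 1 ∧ P.defect = (2 * r)‼ ^ 2 / 2 := by
  have hn := factorial_div_two hr
  have hrow : rowSeq r (r + 1) = yCut r r := by
    obtain ⟨s, rfl⟩ : ∃ s, r = s + 1 := ⟨r - 1, by omega⟩
    rfl
  have hnc : ∀ k ∈ staircaseIndex r, ∀ l ∈ staircaseIndex r,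
      (tile r k).Congruent (tile r l) → k = l :=
    fun k hk l hl => eq_of_congruent_tile hr hk hl
  obtain ⟨P, hP⟩ := exists_mondrian_staircase colSeq_strictMonoOn (rowSeq_strictMonoOn hr) rfl
    rfl (xCut_self.trans hn.symm) (hrow.trans (yCut_self.trans hn.symm)) hnc
  refine ⟨P, hP ▸ card_staircase hnc, ?_⟩
  have hmem {k : ℕ ⊕ ℕ} (hk : k ∈ staircaseIndex r) : tile r k ∈ P.rects :=
    hP ▸ mem_image_of_mem _ hk
  have hbounds : ∀ R ∈ P.rects,
      stripArea r ≤ R.area + halfEven r ^ 2 ∧ R.area ≤ stripArea r + halfEven r ^ 2 := by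
    simp only [hP, staircase, forall_mem_image]
    intro k hk
    change stripArea r ≤ (tile r k).area + _ ∧ (tile r k).area ≤ _
    rcases tile_cases hr hk with ⟨-, h⟩ | ⟨-, h⟩ | ⟨h, -⟩ | ⟨h, -⟩ <;> omega
  have hsq_le : halfEven r ^ 2 ≤ stripArea r :=
    Nat.le_mul_of_pos_left _ (odd_oddSq r).pos
  rw [P.defect_eq (lo := stripArea r - halfEven r ^ 2) (hi := stripArea r + halfEven r ^ 2)
    (fun R hR => by have := hbounds R hR; omega) (fun R hR => (hbounds R hR).2)
    (hmem (k := .inl 0) (by simp [staircaseIndex]))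
    (hmem (k := .inr 1) (by simpa [staircaseIndex] using hr))
    (by have := area_tile_inl_zero hr; omega) (area_tile_inr_one hr),
    doubleFactorial_sq_div_two hr]
  omega

end Spiral

/-- For every `r ≥ 3`, with `k = 2r + 1` and `n = k!/2`, there is a Mondrian
partition of the `n × n` square into exactly `k` rectangles with defect
`((k−1)!!)² / 2`; in particular `d_k(n) ≤ ((k−1)!!)² / 2` and
`d(n) ≤ ((k−1)!!)² / 2`. -/
theorem spiral_construction (r : ℕ) (hr : 3 ≤ r) :
    (∃ P : Mondrian ((2 * r + 1).factorial / 2), P.rects.card = 2 * r + 1 ∧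
      P.defect = (Nat.doubleFactorial (2 * r)) ^ 2 / 2) ∧
    mondrianDk ((2 * r + 1).factorial / 2) (2 * r + 1) ≤
      (Nat.doubleFactorial (2 * r)) ^ 2 / 2 ∧
    mondrianD ((2 * r + 1).factorial / 2) ≤
      (Nat.doubleFactorial (2 * r)) ^ 2 / 2 := by
  obtain ⟨P, hcard, hdefect⟩ := Spiral.exists_mondrian (r := r) (by omega)
  exact ⟨⟨P, hcard, hdefect⟩, Nat.sInf_le ⟨P, hcard, hdefect⟩, Nat.sInf_le ⟨P, by omega, hdefect⟩⟩
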